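/- arXiv:2108.13402 — 6 statements merged into one kernel-verified Lean document; each statement's English description precedes it below -/
import Mathlib

section
/- The quartic surface X in projective 3-space defined by z0^4+z1^4+z2^4+z3^4 - 6(z0^2 z1^2 + z0^2 z2^2 + z0^2 z3^2 + z1^2 z2^2 + z1^2 z3^2 + z2^2 z3^2) = 0 is smooth over the complex numbers; equivalently, the only common complex solution of the four partial derivatives of the defining polynomial is (0,0,0,0). -/
/-! Each partial derivative factors as `∂f/∂zᵢ = 4 zᵢ (4 zᵢ² - 3 s)` with `s = Σ zⱼ²`, so at a
singular point every nonzero coordinate has `zᵢ² = 3s/4`. Summing over the `k` nonzero coordinates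
gives `4 s = 3 k s`, and `3 k ≠ 4` forces `s = 0`, hence every `zᵢ = 0`. -/

/-- The Mukai quartic polynomial. -/
noncomputable def mukaiF (z0 z1 z2 z3 : ℂ) : ℂ :=
  z0^4 + z1^4 + z2^4 + z3^4
    - 6 * (z0^2*z1^2 + z0^2*z2^2 + z0^2*z3^2 + z1^2*z2^2 + z1^2*z3^2 + z2^2*z3^2)

section

variable {K : Type*} [Field K] [CharZero K]

theorem eq_zero_or_four_mul_sq_eq_of_partial_eq_zero {a r s : K}
    (h : 4 * a ^ 3 - 12 * a * r = 0) (hs : a ^ 2 + r = s) :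
    a = 0 ∨ 4 * a ^ 2 = 3 * s := by
  have hfactor : a * (4 * a ^ 2 - 3 * s) = 0 := by
    rw [← hs]
    linear_combination h / 4
  exact (mul_eq_zero.mp hfactor).imp_right sub_eq_zero.mp

theorem eq_zero_of_forall_eq_zero_or_four_mul_sq_eq {ι : Type*} [Fintype ι] (z : ι → K)
    (h : ∀ i, z i = 0 ∨ 4 * z i ^ 2 = 3 * ∑ j, z j ^ 2) : z = 0 := by
  classical
  set s := ∑ j, z j ^ 2
  set k := (Finset.univ.filter fun i => z i ≠ 0).card
  have hsum : 4 * s = 3 * k * s := by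
    calc 4 * s = ∑ j, 4 * z j ^ 2 := Finset.mul_sum _ _ _
      _ = ∑ j, if z j ≠ 0 then 3 * s else 0 := by
        refine Finset.sum_congr rfl fun j _ => ?_
        rcases h j with hj | hj
        · simp [hj]
        · by_cases hj0 : z j = 0 <;> simp_all
      _ = 3 * k * s := by
        rw [Finset.sum_ite, Finset.sum_const_zero, add_zero, Finset.sum_const, nsmul_eq_mul]
        ring
  have hk : (4 : K) ≠ 3 * k := by
    have hk_nat : 4 ≠ 3 * k := by omega
    exact_mod_cast hk_nat
  have hs : s = 0 := by
    have : (4 - 3 * k : K) * s = 0 := by linear_combination hsum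
    exact (mul_eq_zero.mp this).resolve_left (sub_ne_zero.mpr hk)
  funext i
  rcases h i with hi | hi
  · exact hi
  · rw [hs, mul_zero] at hi
    simpa using hi

end

/-- The Mukai quartic surface is smooth: the only common zero of the four partial
derivatives of `mukaiF` is the origin. -/
theorem mukai_quartic_smooth :
    ∀ z0 z1 z2 z3 : ℂ,
      4*z0^3 - 12*z0*(z1^2 + z2^2 + z3^2) = 0 →
      4*z1^3 - 12*z1*(z0^2 + z2^2 + z3^2) = 0 →
      4*z2^3 - 12*z2*(z0^2 + z1^2 + z3^2) = 0 →
      4*z3^3 - 12*z3*(z0^2 + z1^2 + z2^2) = 0 →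
      z0 = 0 ∧ z1 = 0 ∧ z2 = 0 ∧ z3 = 0 := by
  intro z0 z1 z2 z3 h0 h1 h2 h3
  set z : Fin 4 → ℂ := ![z0, z1, z2, z3]
  have hsum : ∑ j, z j ^ 2 = z0 ^ 2 + z1 ^ 2 + z2 ^ 2 + z3 ^ 2 := by
    simp [z, Fin.sum_univ_four]
  have hz : ∀ i, z i = 0 ∨ 4 * z i ^ 2 = 3 * ∑ j, z j ^ 2 := by
    intro i
    rw [hsum]
    fin_cases i <;> dsimp [z]
    · exact eq_zero_or_four_mul_sq_eq_of_partial_eq_zero h0 (by ring)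
    · exact eq_zero_or_four_mul_sq_eq_of_partial_eq_zero h1 (by ring)
    · exact eq_zero_or_four_mul_sq_eq_of_partial_eq_zero h2 (by ring)
    · exact eq_zero_or_four_mul_sq_eq_of_partial_eq_zero h3 (by ring)
  have hzero := eq_zero_of_forall_eq_zero_or_four_mul_sq_eq z hz
  exact ⟨congrFun hzero 0, congrFun hzero 1, congrFun hzero 2, congrFun hzero 3⟩
end

section
/- Every point of the plane conic C1 given by z0+z1+z2=0 and z1^2 + z1 z2 + z2^2 + ((3+√10)/2) z3^2 = 0 lies on the Mukai quartic surface X: substituting z0 = -(z1+z2) into the quartic polynomial f yields a polynomial divisible by z1^2 + z1 z2 + z2^2 + ((3+√10)/2) z3^2. -/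
/-!
On the plane `z0 = -(z1 + z2)` the Mukai quartic becomes a binary quadratic form in
`s = z1^2 + z1 z2 + z2^2` and `t = z3^2`, namely `t^2 - 12 s t - 4 s^2`. Its roots are
`s / t = -(3 ± √10) / 2`, so it splits as `-4 (s + c t) (s + c' t)` with `c, c' = (3 ± √10) / 2`.
-/

open MvPolynomial

theorem mukai_quartic_on_plane {R : Type*} [CommRing R] (a b d : R) :
    (-(a + b)) ^ 4 + a ^ 4 + b ^ 4 + d ^ 4
        - 6 * ((-(a + b)) ^ 2 * a ^ 2 + (-(a + b)) ^ 2 * b ^ 2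
            + (-(a + b)) ^ 2 * d ^ 2 + a ^ 2 * b ^ 2
            + a ^ 2 * d ^ 2 + b ^ 2 * d ^ 2)
      = (d ^ 2) ^ 2 - 12 * (a ^ 2 + a * b + b ^ 2) * d ^ 2
          - 4 * (a ^ 2 + a * b + b ^ 2) ^ 2 := by
  ring

theorem add_mul_dvd_sq_sub_twelve_mul_sub_four_mul_sq {R : Type*} [CommRing R] {c : R}
    (hc : 4 * c ^ 2 = 12 * c + 1) (s t : R) :
    s + c * t ∣ t ^ 2 - 12 * s * t - 4 * s ^ 2 :=
  ⟨-4 * s + (4 * c - 12) * t, by linear_combination (-t ^ 2) * hc⟩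

theorem four_mul_sq_three_add_sqrt_ten_div_two :
    4 * ((3 + Real.sqrt 10) / 2) ^ 2 = 12 * ((3 + Real.sqrt 10) / 2) + 1 := by
  linear_combination Real.sq_sqrt (show (0 : ℝ) ≤ 10 by norm_num)

/-- The conic `C1` lies on the Mukai quartic: substituting `z0 = -(z1+z2)` into the
Mukai quartic polynomial yields a polynomial divisible by
`z1^2 + z1 z2 + z2^2 + ((3+√10)/2) z3^2`.  Variables: `X 0 = z1`, `X 1 = z2`, `X 2 = z3`. -/
theorem conic_C1_on_mukai :
    (X 0 ^ 2 + X 0 * X 1 + X 1 ^ 2 + C ((3 + Real.sqrt 10)/2) * X 2 ^ 2 :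
        MvPolynomial (Fin 3) ℝ) ∣
      ((-(X 0 + X 1))^4 + (X 0)^4 + (X 1)^4 + (X 2)^4
        - 6 * ((-(X 0 + X 1))^2*(X 0)^2 + (-(X 0 + X 1))^2*(X 1)^2
            + (-(X 0 + X 1))^2*(X 2)^2 + (X 0)^2*(X 1)^2
            + (X 0)^2*(X 2)^2 + (X 1)^2*(X 2)^2)) := by
  rw [mukai_quartic_on_plane]
  apply add_mul_dvd_sq_sub_twelve_mul_sub_four_mul_sq
  simpa only [map_mul, map_pow, map_add, map_one, map_ofNat] using
    congrArg (C : ℝ → MvPolynomial (Fin 3) ℝ) four_mul_sq_three_add_sqrt_ten_div_two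
end

section
/- Every point of the conic C3 given by z2 + A·z3 = 0 and z0^2 + 2√2 z0 z1 + z1^2 + (3(√5+1)/2) z3^2 = 0, where A = i(√5+1)/2, lies on the Mukai quartic surface X: substituting z2 = -A z3 into f yields a polynomial divisible by z0^2 + 2√2 z0 z1 + z1^2 + (3(√5+1)/2) z3^2. -/
open MvPolynomial

/-!
On the plane `z2 = -A z3` one has `z2^2 = c z3^2` with `c = A^2 = -(3+√5)/2`, a root of
`c^2 + 3c + 1`. Using this and `(2√2)^2 = 8`, the restricted quartic becomes
`(z0^2 + z1^2 + b z3^2)^2 - 8 z0^2 z1^2` with `b = -3(c+1) = 3(√5+1)/2`, a difference of squares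
whose first factor is the conic.
-/

section MukaiQuartic

variable {R : Type*} [CommRing R]

def mukaiQuartic (z0 z1 z2 z3 : R) : R :=
  z0 ^ 4 + z1 ^ 4 + z2 ^ 4 + z3 ^ 4
    - 6 * (z0 ^ 2 * z1 ^ 2 + z0 ^ 2 * z2 ^ 2 + z0 ^ 2 * z3 ^ 2
      + z1 ^ 2 * z2 ^ 2 + z1 ^ 2 * z3 ^ 2 + z2 ^ 2 * z3 ^ 2)

theorem mukaiQuartic_eq_mul {a b c z0 z1 z2 z3 : R} (ha : a ^ 2 = 8)
    (hc : c ^ 2 + 3 * c + 1 = 0) (hb : b + 3 * (c + 1) = 0) (hz : z2 ^ 2 = c * z3 ^ 2) :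
    mukaiQuartic z0 z1 z2 z3 =
      (z0 ^ 2 + a * z0 * z1 + z1 ^ 2 + b * z3 ^ 2) * (z0 ^ 2 - a * z0 * z1 + z1 ^ 2 + b * z3 ^ 2) := by
  unfold mukaiQuartic
  linear_combination (z2 ^ 2 + c * z3 ^ 2 - 6 * (z0 ^ 2 + z1 ^ 2 + z3 ^ 2)) * hz
    + z0 ^ 2 * z1 ^ 2 * ha - 8 * z3 ^ 4 * hc
    - (2 * (z0 ^ 2 + z1 ^ 2) * z3 ^ 2 + (b - 3 * (c + 1)) * z3 ^ 4) * hb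

theorem conic_dvd_mukaiQuartic {a b c z0 z1 z2 z3 : R} (ha : a ^ 2 = 8)
    (hc : c ^ 2 + 3 * c + 1 = 0) (hb : b + 3 * (c + 1) = 0) (hz : z2 ^ 2 = c * z3 ^ 2) :
    z0 ^ 2 + a * z0 * z1 + z1 ^ 2 + b * z3 ^ 2 ∣ mukaiQuartic z0 z1 z2 z3 :=
  Dvd.intro _ (mukaiQuartic_eq_mul ha hc hb hz).symm

end MukaiQuartic

theorem two_mul_sqrt_two_sq : (2 * (Real.sqrt 2 : ℂ)) ^ 2 = 8 := by
  have : (Real.sqrt 2 : ℂ) ^ 2 = 2 := by norm_cast; simp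
  linear_combination 4 * this

theorem sq_neg_I_mul_sqrt_five_add_one_div_two :
    (-(Complex.I * ((Real.sqrt 5 : ℂ) + 1) / 2)) ^ 2 = -((Real.sqrt 5 : ℂ) + 3) / 2 := by
  have : (Real.sqrt 5 : ℂ) ^ 2 = 5 := by norm_cast; simp
  linear_combination (((Real.sqrt 5 : ℂ) + 1) ^ 2 / 4) * Complex.I_sq - this / 4

theorem neg_sqrt_five_add_three_div_two_isRoot :
    (-((Real.sqrt 5 : ℂ) + 3) / 2) ^ 2 + 3 * (-((Real.sqrt 5 : ℂ) + 3) / 2) + 1 = 0 := by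
  have : (Real.sqrt 5 : ℂ) ^ 2 = 5 := by norm_cast; simp
  linear_combination this / 4

-- `X 0, X 1, X 2` stand for `z0, z1, z3`.
/-- The conic `C3` lies on the Mukai quartic: with `A = i(√5+1)/2`, substituting
`z2 = -A z3` into the Mukai quartic polynomial yields a polynomial divisible by
`z0^2 + 2√2 z0 z1 + z1^2 + (3(√5+1)/2) z3^2`.
Variables: `X 0 = z0`, `X 1 = z1`, `X 2 = z3`. -/
theorem conic_C3_on_mukai :
    (X 0 ^ 2 + C (2 * (Real.sqrt 2 : ℂ)) * X 0 * X 1 + X 1 ^ 2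
        + C (3 * ((Real.sqrt 5 : ℂ) + 1) / 2) * X 2 ^ 2 : MvPolynomial (Fin 3) ℂ) ∣
      ((X 0)^4 + (X 1)^4 + (C (-(Complex.I * ((Real.sqrt 5 : ℂ) + 1) / 2)) * X 2)^4 + (X 2)^4
        - 6 * ((X 0)^2*(X 1)^2
            + (X 0)^2*(C (-(Complex.I * ((Real.sqrt 5 : ℂ) + 1) / 2)) * X 2)^2
            + (X 0)^2*(X 2)^2
            + (X 1)^2*(C (-(Complex.I * ((Real.sqrt 5 : ℂ) + 1) / 2)) * X 2)^2
            + (X 1)^2*(X 2)^2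
            + (C (-(Complex.I * ((Real.sqrt 5 : ℂ) + 1) / 2)) * X 2)^2*(X 2)^2)) := by
  refine conic_dvd_mukaiQuartic (c := C (-((Real.sqrt 5 : ℂ) + 3) / 2)) ?_ ?_ ?_ ?_
  · rw [← map_pow, two_mul_sqrt_two_sq, map_ofNat]
  · simpa only [map_add, map_mul, map_pow, map_one, map_ofNat, map_zero]
      using congrArg (C : ℂ →+* MvPolynomial (Fin 3) ℂ) neg_sqrt_five_add_three_div_two_isRoot
  · have hb : 3 * ((Real.sqrt 5 : ℂ) + 1) / 2 + 3 * (-((Real.sqrt 5 : ℂ) + 3) / 2 + 1) = 0 := by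
      ring
    simpa only [map_add, map_mul, map_one, map_ofNat, map_zero]
      using congrArg (C : ℂ →+* MvPolynomial (Fin 3) ℂ) hb
  · rw [mul_pow, ← map_pow, sq_neg_I_mul_sqrt_five_add_one_div_two]
end

section
/- Each of the four generators s1, s2, s3, s4 of the complex reflection group G_29 preserves the Mukai quartic polynomial: for each generator s, f(s·(z0,z1,z2,z3)) = f(z0,z1,z2,z3) as polynomials, where f(z0,z1,z2,z3) = z0^4+z1^4+z2^4+z3^4 - 6*Σ_{i<j} z_i^2 z_j^2. -/
open Complex

theorem mukaiF_add_sub (p q r t : ℂ) :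
    mukaiF (p + q) (p - q) (r + t) (r - t) =
      4 * (p^2 + q^2)^2 - 8 * (p^2 - q^2)^2 + 4 * (r^2 + t^2)^2 - 8 * (r^2 - t^2)^2
        - 24 * (p^2 + q^2) * (r^2 + t^2) := by
  unfold mukaiF
  ring

theorem I_mul_sq (x : ℂ) : (I * x)^2 = -x^2 := by
  rw [mul_pow, I_sq, neg_one_mul]

theorem mukaiF_s2 (z0 z1 z2 z3 : ℂ) :
    mukaiF ((z0 + z1 + I*z2 + I*z3)/2) ((z0 + z1 - I*z2 - I*z3)/2)
      ((-I*z0 + I*z1 + z2 - z3)/2) ((-I*z0 + I*z1 - z2 + z3)/2) = mukaiF z0 z1 z2 z3 := by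
  have hadamard := mukaiF_add_sub ((z0 + z1)/2) (I * ((z2 + z3)/2))
    (I * ((z1 - z0)/2)) ((z2 - z3)/2)
  rw [I_mul_sq, I_mul_sq] at hadamard
  convert hadamard using 1
  · congr 1 <;> ring
  · unfold mukaiF
    ring

/-- Each of the four generators `s1, s2, s3, s4` of `G_29` preserves the Mukai quartic
polynomial. -/
theorem generators_preserve_mukai :
    ∀ z0 z1 z2 z3 : ℂ,
      mukaiF z0 z1 z2 (-z3) = mukaiF z0 z1 z2 z3 ∧
      mukaiF ((z0 + z1 + Complex.I*z2 + Complex.I*z3)/2)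
             ((z0 + z1 - Complex.I*z2 - Complex.I*z3)/2)
             ((-Complex.I*z0 + Complex.I*z1 + z2 - z3)/2)
             ((-Complex.I*z0 + Complex.I*z1 - z2 + z3)/2) = mukaiF z0 z1 z2 z3 ∧
      mukaiF z1 z0 z2 z3 = mukaiF z0 z1 z2 z3 ∧
      mukaiF z0 z2 z1 z3 = mukaiF z0 z1 z2 z3 := by
  intro z0 z1 z2 z3
  refine ⟨?_, mukaiF_s2 z0 z1 z2 z3, ?_, ?_⟩ <;>
  · unfold mukaiF
    ring
end

section
/- The curve cut out on the Mukai quartic by the hyperplane z3 = 0, i.e. the plane quartic curve z0^4 + z1^4 + z2^4 - 6(z0^2 z1^2 + z0^2 z2^2 + z1^2 z2^2) = 0 in ℙ^2, is smooth over ℂ: the only common complex zero of the polynomial and its three partial derivatives is (0,0,0). -/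
/-!
Writing `a i = z i ^ 2`, the vanishing of `∂g/∂z i = 4 z i (z i ^ 2 - 3 ∑_{j ≠ i} a j)` says that
every `a i` is `0` or equal to `3S/4`, where `S = a 0 + a 1 + a 2`. If `k` of them are nonzero,
summing gives `4S = 3kS`; since `3 ∤ 4`, this forces `S = 0`, and then every `a i = 0`.
-/

open Finset

theorem eq_zero_of_forall_eq_zero_or_mul_eq_mul_sum {K ι : Type*} [Field K] [CharZero K]
    [Fintype ι] {p q : ℕ} (hqp : ¬ q ∣ p) {a : ι → K}
    (ha : ∀ i, a i = 0 ∨ p * a i = q * ∑ j, a j) (i : ι) : a i = 0 := by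
  classical
  set S := ∑ j, a j
  set T := univ.filter (a · ≠ 0)
  have hpS : (p : K) * S = (T.card * q : ℕ) * S :=
    calc (p : K) * S = ∑ j ∈ T, (p : K) * a j := by rw [← mul_sum, sum_filter_ne_zero]
      _ = ∑ _j ∈ T, (q : K) * S :=
          sum_congr rfl fun j hj => (ha j).resolve_left (mem_filter.mp hj).2
      _ = (T.card * q : ℕ) * S := by simp [mul_assoc]
  have hS : S = 0 := by
    by_contra hS
    exact hqp ⟨T.card, by rw [Nat.cast_injective (mul_right_cancel₀ hS hpS), mul_comm]⟩
  have hp : p ≠ 0 := by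
    rintro rfl
    exact hqp (dvd_zero q)
  rcases ha i with h | h
  · exact h
  · rw [hS, mul_zero] at h
    exact (mul_eq_zero.mp h).resolve_left (Nat.cast_ne_zero.mpr hp)

theorem sq_eq_zero_or_four_mul_sq_eq {K : Type*} [Field K] [CharZero K] {x s : K}
    (h : 4 * x ^ 3 - 12 * x * s = 0) : x ^ 2 = 0 ∨ 4 * x ^ 2 = 3 * (x ^ 2 + s) := by
  have : x * (x ^ 2 - 3 * s) = 0 := by linear_combination h / 4
  rcases mul_eq_zero.mp this with hx | hx
  · left; simp [hx]
  · right; linear_combination hx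

/-- The plane quartic `z0^4+z1^4+z2^4-6(z0^2z1^2+z0^2z2^2+z1^2z2^2) = 0` cut out on the
Mukai quartic by `z3 = 0` is smooth: the only common zero of the three partial
derivatives is the origin. -/
theorem hyperplane_section_z3_smooth :
    ∀ z0 z1 z2 : ℂ,
      4*z0^3 - 12*z0*(z1^2 + z2^2) = 0 →
      4*z1^3 - 12*z1*(z0^2 + z2^2) = 0 →
      4*z2^3 - 12*z2*(z0^2 + z1^2) = 0 →
      z0 = 0 ∧ z1 = 0 ∧ z2 = 0 := by
  intro z0 z1 z2 h0 h1 h2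
  have hsq : ∀ i, ![z0 ^ 2, z1 ^ 2, z2 ^ 2] i = 0 :=
    eq_zero_of_forall_eq_zero_or_mul_eq_mul_sum (p := 4) (q := 3) (by decide) fun i => by
      fin_cases i <;> simp only [Fin.sum_univ_three, Matrix.cons_val, Nat.cast_ofNat]
      · exact (sq_eq_zero_or_four_mul_sq_eq h0).imp_right (·.trans (by ring))
      · exact (sq_eq_zero_or_four_mul_sq_eq h1).imp_right (·.trans (by ring))
      · exact (sq_eq_zero_or_four_mul_sq_eq h2).imp_right (·.trans (by ring))
  exact ⟨eq_zero_of_pow_eq_zero (hsq 0), eq_zero_of_pow_eq_zero (hsq 1),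
    eq_zero_of_pow_eq_zero (hsq 2)⟩
end

section
/- Over ℂ, for generic parameter t the quartic polynomial F_t(z0,z1,z3) = z0^4 + z1^4 + (1+t^4) z3^4 - 6(t^2 z3^4 + (t^2+1)(z0^2+z1^2) z3^2 + z0^2 z1^2) defines a smooth plane curve: if t ∈ ℂ is not a root of (t^2-2t-1)(t^2+2t-1)(t^4+3t^2+1)(5t^4+6t^2+5), then the only common zero in ℂ^3 of the three partial derivatives ∂F_t/∂z0, ∂F_t/∂z1, ∂F_t/∂z3 is (0,0,0). -/
/-! Each partial derivative of `F_t` factors as `4 z_i` times a linear form in the squares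
`a = z0^2, b = z1^2, c = z3^2`, so the squares satisfy the complementarity system
`x_i (M x)_i = 0` for the matrix `M = [[1, -3, -3s], [-3, 1, -3s], [-3s, -3s, d]]` with
`s = t^2 + 1` and `d = t^4 - 6t^2 + 1`. On the support `S` of `x` this reads `M_SS x_S = 0`,
so `x = 0` as soon as every principal minor of `M` is nonzero. These minors are `1`, `d`,
`-8`, `d - 9s^2` and `-8 (d + 9s^2)`, and up to units `d`, `d - 9s^2`, `d + 9s^2` are the
factors `(t^2-2t-1)(t^2+2t-1)`, `t^4+3t^2+1`, `5t^4+6t^2+5` of `g`. -/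

noncomputable def Fq (t z0 z1 z3 : ℂ) : ℂ :=
  z0^4 + z1^4 + (1 + t^4) * z3^4
    - 6 * (t^2 * z3^4 + (t^2 + 1) * (z0^2 + z1^2) * z3^2 + z0^2 * z1^2)

noncomputable def Fq0 (t z0 z1 z3 : ℂ) : ℂ :=
  4*z0^3 - 12*(t^2 + 1)*z0*z3^2 - 12*z0*z1^2

noncomputable def Fq1 (t z0 z1 z3 : ℂ) : ℂ :=
  4*z1^3 - 12*(t^2 + 1)*z1*z3^2 - 12*z1*z0^2

noncomputable def Fq3 (t z0 z1 z3 : ℂ) : ℂ :=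
  4*(1 + t^4)*z3^3 - 24*t^2*z3^3 - 12*(t^2 + 1)*(z0^2 + z1^2)*z3

section Complementarity

variable {K : Type*} [Field K]

theorem eq_zero_of_complementarity₂ (h2 : (2 : K) ≠ 0) {a b : K}
    (ha : a * (a - 3 * b) = 0) (hb : b * (b - 3 * a) = 0) : a = 0 ∧ b = 0 := by
  have h8 : (8 : K) ≠ 0 := by
    simpa [show (8 : K) = 2 ^ 3 by norm_num] using pow_ne_zero 3 h2
  rcases mul_eq_zero.mp ha with ha | ha <;> rcases mul_eq_zero.mp hb with hb | hb
  · exact ⟨ha, hb⟩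
  · exact ⟨ha, by simpa [ha] using hb⟩
  · exact ⟨by simpa [hb] using ha, hb⟩
  · have ha0 : a = 0 := eq_zero_of_ne_zero_of_mul_left_eq_zero h8 <| by
      linear_combination -ha - 3 * hb
    exact ⟨ha0, by simpa [ha0] using hb⟩

theorem eq_zero_of_complementarity₃ (h2 : (2 : K) ≠ 0) {a b c s d : K}
    (ha : a * (a - 3 * b - 3 * s * c) = 0) (hb : b * (b - 3 * a - 3 * s * c) = 0)
    (hc : c * (d * c - 3 * s * (a + b)) = 0)
    (hd : d ≠ 0) (hds : d - 9 * s ^ 2 ≠ 0) (hdet : d + 9 * s ^ 2 ≠ 0) :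
    a = 0 ∧ b = 0 ∧ c = 0 := by
  suffices hc0 : c = 0 by
    subst hc0
    obtain ⟨ha0, hb0⟩ := eq_zero_of_complementarity₂ h2 (by simpa using ha) (by simpa using hb)
    exact ⟨ha0, hb0, rfl⟩
  rcases mul_eq_zero.mp hc with hc | hc
  · exact hc
  rcases mul_eq_zero.mp ha with ha | ha <;> rcases mul_eq_zero.mp hb with hb | hb
  · exact eq_zero_of_ne_zero_of_mul_left_eq_zero hd <| by
      linear_combination hc + 3 * s * ha + 3 * s * hb
  · exact eq_zero_of_ne_zero_of_mul_left_eq_zero hds <| by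
      linear_combination hc + 3 * s * hb + 12 * s * ha
  · exact eq_zero_of_ne_zero_of_mul_left_eq_zero hds <| by
      linear_combination hc + 3 * s * ha + 12 * s * hb
  · exact eq_zero_of_ne_zero_of_mul_left_eq_zero (mul_ne_zero h2 hdet) <| by
      linear_combination 2 * hc - 3 * s * (ha + hb)

end Complementarity

/-- For `t` not a root of `(t^2-2t-1)(t^2+2t-1)(t^4+3t^2+1)(5t^4+6t^2+5)`, the plane
quartic `F_t = 0` is smooth: the only common zero of the three partial derivatives of
`F_t` is the origin. -/
theorem generic_fibre_smooth (t z0 z1 z3 : ℂ)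
    (hg : (t^2 - 2*t - 1)*(t^2 + 2*t - 1)*(t^4 + 3*t^2 + 1)*(5*t^4 + 6*t^2 + 5) ≠ 0)
    (h0 : Fq0 t z0 z1 z3 = 0) (h1 : Fq1 t z0 z1 z3 = 0) (h3 : Fq3 t z0 z1 z3 = 0) :
    z0 = 0 ∧ z1 = 0 ∧ z3 = 0 := by
  obtain ⟨⟨hd, hds⟩, hdet⟩ := mul_ne_zero_iff.mp hg |>.imp_left mul_ne_zero_iff.mp
  unfold Fq0 Fq1 Fq3 at *
  have hsq := eq_zero_of_complementarity₃ two_ne_zero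
    (a := z0 ^ 2) (b := z1 ^ 2) (c := z3 ^ 2) (s := t ^ 2 + 1) (d := t ^ 4 - 6 * t ^ 2 + 1)
    (by linear_combination z0 / 4 * h0) (by linear_combination z1 / 4 * h1)
    (by linear_combination z3 / 4 * h3)
    (fun h => hd (by linear_combination h)) (fun h => hds (by linear_combination -h / 8))
    (fun h => hdet (by linear_combination h / 2))
  simpa using hsq
end
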